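/- Let s ≥ 2 and let θ₁,…,θ_s be nonnegative real numbers with ∑_{i=1}^s θ_i = 2π, θ_i ≤ π for 1 ≤ i ≤ s−1, and π < θ_s ≤ 2π. Then ∑_{i=1}^{s-1} sin(θ_i/2) + 2 sin(θ_s/4) ≤ (s+1)·sin(π/(s+1)) ≤ π. -/
import Mathlib

open Real

/-- **Sine sum bound with one reflex angle.** Let `s ≥ 2` and let `θ₁,…,θ_{s-1}, θlast` be
nonnegative reals summing to `2π`, with `θᵢ ≤ π` for `1 ≤ i ≤ s-1` and `π < θlast ≤ 2π`.
Then `∑_{i=1}^{s-1} sin(θᵢ/2) + 2 sin(θlast/4) ≤ (s+1)·sin(π/(s+1)) ≤ π`. -/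
theorem sine_sum_le_reflex (s : ℕ) (hs : 2 ≤ s) (θ : Fin (s - 1) → ℝ) (θlast : ℝ)
    (hnn : ∀ i, 0 ≤ θ i) (hle : ∀ i, θ i ≤ π)
    (hlast₁ : π < θlast) (hlast₂ : θlast ≤ 2 * π)
    (hsum : ∑ i, θ i + θlast = 2 * π) :
    (∑ i, Real.sin (θ i / 2)) + 2 * Real.sin (θlast / 4) ≤
        (s + 1) * Real.sin (π / (s + 1)) ∧
      ((s : ℝ) + 1) * Real.sin (π / (s + 1)) ≤ π := by
  have hsp : (0:ℝ) < (s:ℝ) + 1 := by positivity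
  constructor
  · -- Jensen
    set p : Fin (s - 1) ⊕ Fin 2 → ℝ := Sum.elim (fun i => θ i / 2) (fun _ => θlast / 4) with hp
    have hcard : (Fintype.card (Fin (s - 1) ⊕ Fin 2) : ℝ) = (s : ℝ) + 1 := by
      have h1 : 1 ≤ s := by omega
      simp only [Fintype.card_sum, Fintype.card_fin]
      push_cast [Nat.cast_sub h1]
      ring
    have hw : ∑ _i : Fin (s - 1) ⊕ Fin 2, (1 / ((s:ℝ) + 1)) = 1 := by
      rw [Finset.sum_const, Finset.card_univ, nsmul_eq_mul, hcard]
      field_simp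
    have hmem : ∀ i ∈ Finset.univ, p i ∈ Set.Icc (0:ℝ) π := by
      rintro (i | j) -
      · constructor
        · have := hnn i; simpa [hp] using by linarith
        · have := hle i
          simp only [hp, Sum.elim_inl]
          nlinarith [pi_pos]
      · constructor
        · simp only [hp, Sum.elim_inr]
          nlinarith [pi_pos]
        · simp only [hp, Sum.elim_inr]
          nlinarith [pi_pos]
    have hjen := strictConcaveOn_sin_Icc.concaveOn.le_map_sum
      (t := Finset.univ) (w := fun _ => 1 / ((s:ℝ) + 1)) (p := p)
      (fun i _ => by positivity) hw hmem
    have hsump : ∑ i : Fin (s - 1) ⊕ Fin 2, (1 / ((s:ℝ) + 1)) • p i = π / ((s:ℝ) + 1) := by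
      rw [← Finset.smul_sum]
      have : ∑ i : Fin (s - 1) ⊕ Fin 2, p i = π := by
        rw [Fintype.sum_sum_type]
        simp only [hp, Sum.elim_inl, Sum.elim_inr]
        rw [← Finset.sum_div, Fin.sum_univ_two]
        linarith
      rw [this]
      simp [smul_eq_mul]
      ring
    rw [hsump] at hjen
    have hlhs : ∑ i : Fin (s - 1) ⊕ Fin 2, (1 / ((s:ℝ) + 1)) • Real.sin (p i)
        = (1 / ((s:ℝ) + 1)) * ((∑ i, Real.sin (θ i / 2)) + 2 * Real.sin (θlast / 4)) := by
      rw [← Finset.smul_sum, Fintype.sum_sum_type]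
      simp only [hp, Sum.elim_inl, Sum.elim_inr, Fin.sum_univ_two, smul_eq_mul]
      ring
    rw [hlhs] at hjen
    have := mul_le_mul_of_nonneg_left hjen hsp.le
    calc (∑ i, Real.sin (θ i / 2)) + 2 * Real.sin (θlast / 4)
        = ((s:ℝ) + 1) * ((1 / ((s:ℝ) + 1)) * ((∑ i, Real.sin (θ i / 2)) + 2 * Real.sin (θlast / 4))) := by
          field_simp
      _ ≤ ((s:ℝ) + 1) * Real.sin (π / ((s:ℝ) + 1)) := this
      _ = ((s:ℝ) + 1) * Real.sin (π / ((s:ℝ) + 1)) := rfl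
  · have h1 : Real.sin (π / ((s:ℝ) + 1)) ≤ π / ((s:ℝ) + 1) :=
      Real.sin_le (by positivity)
    calc ((s:ℝ) + 1) * Real.sin (π / (s + 1)) ≤ ((s:ℝ) + 1) * (π / ((s:ℝ) + 1)) :=
          mul_le_mul_of_nonneg_left h1 hsp.le
      _ = π := by field_simp
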